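/- Let 1/2 < σ < 1, β ∈ ℝ, 0 < ε < 1, and let f_ε be the regularization of f(ρ) = β ρ^σ as above. Then there is a constant C₂ depending only on σ and β such that |√ρ f_ε'(ρ)| + |ρ^{3/2} f_ε''(ρ)| ≤ C₂ ρ^{σ-1/2} for all ρ ≥ 0. -/

import Mathlib

/-!
After the substitution `ρ = ε² t` one has `f_ε(ρ) = (ε²)^σ f_1(t)`, and the weighted quantity
`|√ρ f_ε'(ρ)| + |ρ^{3/2} f_ε''(ρ)|` is homogeneous of degree `σ - 1/2` under this rescaling, so it
suffices to treat `ε = 1`. On `[1, ∞)` the bound is an identity for `β t^σ`. On `[0, 1]` the function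
`f_1` is a polynomial whose first two derivatives are bounded by compactness, and `√t`, `t^{3/2}`
are at most `t^{σ-1/2}` because `σ ≤ 1`. The cubic `Q_ε` makes the two pieces agree to second order
at the junction, so `f_1` is twice differentiable there.
-/

/-- Generalized binomial coefficient `binom(x, j) = x(x-1)⋯(x-j+1)/j!`. -/
noncomputable def gbinom (x : ℝ) (j : ℕ) : ℝ :=
  (∏ i ∈ Finset.range j, (x - i)) / (Nat.factorial j)

/-- The cubic polynomial `Q_ε(ρ) = β ε^{2σ-2} Σ_{j=0}^{3} binom(j-σ, j)(1-ρ/ε²)^j`. -/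
noncomputable def Qreg (σ β ε ρ : ℝ) : ℝ :=
  β * ε ^ (2 * σ - 2) *
    ∑ j ∈ Finset.range 4, gbinom ((j : ℝ) - σ) j * (1 - ρ / ε ^ 2) ^ j

/-- The local regularization `f_ε` of `f(ρ) = β ρ^σ`. -/
noncomputable def freg (σ β ε ρ : ℝ) : ℝ :=
  if ε ^ 2 ≤ ρ then β * ρ ^ σ else ρ * Qreg σ β ε ρ

open Set Filter Topology Polynomial

theorem hasDerivAt_of_eqOn_Iic_of_eqOn_Ici {f p q : ℝ → ℝ} {a d : ℝ}
    (hp : HasDerivAt p d a) (hq : HasDerivAt q d a)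
    (hfp : EqOn f p (Iic a)) (hfq : EqOn f q (Ici a)) : HasDerivAt f d a := by
  have h := (hp.hasDerivWithinAt.congr hfp (hfp self_mem_Iic)).union
    (hq.hasDerivWithinAt.congr hfq (hfq self_mem_Ici))
  rwa [Iic_union_Ici, hasDerivWithinAt_univ] at h

theorem eqOn_deriv_Iic_Ici {f p q p' q' : ℝ → ℝ} {a : ℝ}
    (hp : ∀ x ≤ a, HasDerivAt p (p' x) x) (hq : ∀ x ≥ a, HasDerivAt q (q' x) x)
    (hfp : EqOn f p (Iic a)) (hfq : EqOn f q (Ici a)) (ha : p' a = q' a) :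
    EqOn (deriv f) p' (Iic a) ∧ EqOn (deriv f) q' (Ici a) := by
  have hf_a : HasDerivAt f (p' a) a :=
    hasDerivAt_of_eqOn_Iic_of_eqOn_Ici (hp a le_rfl) (ha ▸ hq a le_rfl) hfp hfq
  constructor
  · intro x (hx : x ≤ a)
    rcases hx.lt_or_eq with hx | rfl
    · have hev : f =ᶠ[𝓝 x] p :=
        eventually_of_mem (Iio_mem_nhds hx) fun _ hy => hfp (mem_Iic.2 (le_of_lt hy))
      exact hev.deriv_eq.trans (hp x hx.le).deriv
    · exact hf_a.deriv
  · intro x (hx : a ≤ x)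
    rcases hx.lt_or_eq with hx | rfl
    · have hev : f =ᶠ[𝓝 x] q :=
        eventually_of_mem (Ioi_mem_nhds hx) fun _ hy => hfq (mem_Ici.2 (le_of_lt hy))
      exact hev.deriv_eq.trans (hq x hx.le).deriv
    · exact ha ▸ hf_a.deriv

theorem deriv_const_mul_comp_div (g : ℝ → ℝ) (c s : ℝ) :
    deriv (fun x => c * g (x / s)) = fun x => c / s * deriv g (x / s) := by
  ext x
  have h := deriv_comp_mul_left s⁻¹ g x
  simp only [smul_eq_mul] at h
  simp only [div_eq_inv_mul, deriv_const_mul_field', h]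
  ring

noncomputable def weightedDerivNorm (g : ℝ → ℝ) (t : ℝ) : ℝ :=
  |√t * deriv g t| + |t ^ ((3 : ℝ) / 2) * iteratedDeriv 2 g t|

theorem weightedDerivNorm_eq (g : ℝ → ℝ) (t : ℝ) :
    weightedDerivNorm g t = |√t * deriv g t| + |t ^ ((3 : ℝ) / 2) * deriv (deriv g) t| := by
  rw [weightedDerivNorm, iteratedDeriv_succ, iteratedDeriv_one]

theorem weightedDerivNorm_rescale (g : ℝ → ℝ) (σ : ℝ) {s t : ℝ} (hs : 0 < s) (ht : 0 ≤ t) :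
    weightedDerivNorm (fun x => s ^ σ * g (x / s)) (s * t) =
      s ^ (σ - 1 / 2) * weightedDerivNorm g t := by
  have h1 : √s * (s ^ σ / s) = s ^ (σ - 1 / 2) := by
    rw [Real.sqrt_eq_rpow, ← Real.rpow_sub_one hs.ne', ← Real.rpow_add hs]; congr 1; ring
  have h2 : s ^ ((3 : ℝ) / 2) * (s ^ σ / s / s) = s ^ (σ - 1 / 2) := by
    rw [← Real.rpow_sub_one hs.ne', ← Real.rpow_sub_one hs.ne', ← Real.rpow_add hs]; congr 1; ring
  rw [weightedDerivNorm_eq, weightedDerivNorm_eq, deriv_const_mul_comp_div,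
    deriv_const_mul_comp_div]
  beta_reduce
  rw [mul_div_cancel_left₀ t hs.ne', Real.sqrt_mul hs.le, Real.mul_rpow hs.le ht,
    mul_mul_mul_comm, mul_mul_mul_comm (s ^ _), h1, h2, abs_mul (s ^ _), abs_mul (s ^ _),
    abs_of_pos (Real.rpow_pos_of_pos hs _), mul_add]

theorem abs_sqrt_mul_add_abs_rpow_mul_le {σ t a b A : ℝ} (hσ : σ ≤ 1) (ht0 : 0 ≤ t)
    (ht1 : t ≤ 1) (hab : |a| + |b| ≤ A) :
    |√t * a| + |t ^ ((3 : ℝ) / 2) * b| ≤ A * t ^ (σ - 1 / 2) := by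
  rcases ht0.eq_or_lt with rfl | ht0
  · have hA : 0 ≤ A := (add_nonneg (abs_nonneg a) (abs_nonneg b)).trans hab
    rw [Real.sqrt_zero, Real.zero_rpow (by norm_num)]
    simp only [zero_mul, abs_zero, add_zero]
    positivity
  have hsqrt : √t ≤ t ^ (σ - 1 / 2) := by
    rw [Real.sqrt_eq_rpow]
    exact Real.rpow_le_rpow_of_exponent_ge ht0 ht1 (by linarith)
  have hpow : t ^ ((3 : ℝ) / 2) ≤ t ^ (σ - 1 / 2) :=
    Real.rpow_le_rpow_of_exponent_ge ht0 ht1 (by linarith)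
  rw [abs_mul, abs_mul, abs_of_nonneg (Real.sqrt_nonneg t), abs_of_pos (Real.rpow_pos_of_pos ht0 _)]
  calc √t * |a| + t ^ ((3 : ℝ) / 2) * |b| ≤ t ^ (σ - 1 / 2) * |a| + t ^ (σ - 1 / 2) * |b| := by
        gcongr
    _ = t ^ (σ - 1 / 2) * (|a| + |b|) := by ring
    _ ≤ A * t ^ (σ - 1 / 2) := by rw [mul_comm]; gcongr

theorem abs_sqrt_mul_add_abs_rpow_mul_rpow_derivs {σ t : ℝ} (β : ℝ) (ht : 0 < t) :
    |√t * (β * (σ * t ^ (σ - 1)))|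
        + |t ^ ((3 : ℝ) / 2) * (β * (σ * ((σ - 1) * t ^ (σ - 1 - 1))))| =
      (|β * σ| + |β * σ * (σ - 1)|) * t ^ (σ - 1 / 2) := by
  have h1 : √t * t ^ (σ - 1) = t ^ (σ - 1 / 2) := by
    rw [Real.sqrt_eq_rpow, ← Real.rpow_add ht]; congr 1; ring
  have h2 : t ^ ((3 : ℝ) / 2) * t ^ (σ - 1 - 1) = t ^ (σ - 1 / 2) := by
    rw [← Real.rpow_add ht]; congr 1; ring
  have e1 : √t * (β * (σ * t ^ (σ - 1))) = β * σ * t ^ (σ - 1 / 2) := by rw [← h1]; ring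
  have e2 : t ^ ((3 : ℝ) / 2) * (β * (σ * ((σ - 1) * t ^ (σ - 1 - 1)))) =
      β * σ * (σ - 1) * t ^ (σ - 1 / 2) := by rw [← h2]; ring
  rw [e1, e2, abs_mul (β * σ), abs_mul (β * σ * (σ - 1)), abs_of_pos (Real.rpow_pos_of_pos ht _)]
  ring

theorem freg_eq_rescale (σ β : ℝ) {ε : ℝ} (hε : 0 < ε) (ρ : ℝ) :
    freg σ β ε ρ = (ε ^ 2) ^ σ * freg σ β 1 (ρ / ε ^ 2) := by
  have hs : 0 < ε ^ 2 := by positivity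
  have hpow : ε ^ (2 * σ - 2) = (ε ^ 2) ^ σ / ε ^ 2 := by
    rw [← Real.rpow_sub_one hs.ne', ← Real.rpow_natCast, ← Real.rpow_mul hε.le]
    norm_num [mul_sub]
  simp only [freg, Qreg, one_pow, Real.one_rpow, div_one, le_div_iff₀ hs, one_mul]
  split_ifs with h
  · rw [Real.div_rpow (hs.le.trans h) hs.le]
    field_simp
  · rw [hpow]
    field_simp

/-- `t ↦ t Q_1(t)`: since `binom(j-σ, j) = (-1)^j binom(σ-1, j)`, the sum is the cubic Taylor
polynomial of `t^{σ-1}` at `t = 1`. -/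
noncomputable def regPoly (σ β : ℝ) : ℝ[X] :=
  C β * X * ∑ j ∈ Finset.range 4, C (gbinom ((j : ℝ) - σ) j) * (1 - X) ^ j

theorem eval_regPoly (σ β t : ℝ) : (regPoly σ β).eval t = t * Qreg σ β 1 t := by
  simp only [regPoly, Qreg, eval_mul, eval_C, eval_X, eval_finsetSum, eval_pow, eval_sub, eval_one,
    Real.one_rpow, mul_one, one_pow, div_one]
  ring

theorem regPoly_derivatives_eval_one (σ β : ℝ) :
    (regPoly σ β).eval 1 = β * 1 ^ σ ∧
      (derivative (regPoly σ β)).eval 1 = β * (σ * 1 ^ (σ - 1)) ∧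
      (derivative (derivative (regPoly σ β))).eval 1 = β * (σ * ((σ - 1) * 1 ^ (σ - 1 - 1))) := by
  refine ⟨?_, ?_, ?_⟩ <;>
  · simp only [regPoly, gbinom, Finset.sum_range_succ, Finset.prod_range_succ,
      Finset.sum_range_zero, Finset.prod_range_zero, Nat.factorial, derivative_mul, derivative_C,
      derivative_X, derivative_pow, derivative_sub, derivative_one, derivative_add, derivative_zero,
      eval_add, eval_sub, eval_mul, eval_C, eval_X, eval_one, eval_pow, eval_zero, Real.one_rpow]
    ring

theorem eqOn_freg_one_Iic (σ β : ℝ) :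
    EqOn (freg σ β 1) (fun t => (regPoly σ β).eval t) (Iic 1) := by
  intro t (ht : t ≤ 1)
  rcases ht.lt_or_eq with ht | rfl
  · simp [freg, ht, eval_regPoly]
  · simp [freg, (regPoly_derivatives_eval_one σ β).1]

theorem eqOn_freg_one_Ici (σ β : ℝ) : EqOn (freg σ β 1) (fun t => β * t ^ σ) (Ici 1) := by
  intro t (ht : 1 ≤ t)
  simp [freg, ht]

theorem eqOn_deriv_freg_one (σ β : ℝ) :
    EqOn (deriv (freg σ β 1)) (fun t => (derivative (regPoly σ β)).eval t) (Iic 1) ∧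
      EqOn (deriv (freg σ β 1)) (fun t => β * (σ * t ^ (σ - 1))) (Ici 1) :=
  eqOn_deriv_Iic_Ici (fun x _ => Polynomial.hasDerivAt _ x)
    (fun _ hx => (Real.hasDerivAt_rpow_const (Or.inl (zero_lt_one.trans_le hx).ne')).const_mul β)
    (eqOn_freg_one_Iic σ β) (eqOn_freg_one_Ici σ β) (regPoly_derivatives_eval_one σ β).2.1

theorem eqOn_deriv_deriv_freg_one (σ β : ℝ) :
    EqOn (deriv (deriv (freg σ β 1)))
        (fun t => (derivative (derivative (regPoly σ β))).eval t) (Iic 1) ∧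
      EqOn (deriv (deriv (freg σ β 1)))
        (fun t => β * (σ * ((σ - 1) * t ^ (σ - 1 - 1)))) (Ici 1) :=
  eqOn_deriv_Iic_Ici (fun x _ => Polynomial.hasDerivAt _ x)
    (fun _ hx => ((Real.hasDerivAt_rpow_const
      (Or.inl (zero_lt_one.trans_le hx).ne')).const_mul σ).const_mul β)
    (eqOn_deriv_freg_one σ β).1 (eqOn_deriv_freg_one σ β).2
    (regPoly_derivatives_eval_one σ β).2.2

theorem exists_weightedDerivNorm_freg_one_le (σ β : ℝ) (hσ : σ ≤ 1) :
    ∃ M, 0 < M ∧ ∀ t, 0 ≤ t → weightedDerivNorm (freg σ β 1) t ≤ M * t ^ (σ - 1 / 2) := by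
  have hcont : ContinuousOn (fun t => |(derivative (regPoly σ β)).eval t| +
      |(derivative (derivative (regPoly σ β))).eval t|) (Icc 0 1) := by fun_prop
  obtain ⟨A, hA⟩ := isCompact_Icc.exists_bound_of_continuousOn hcont
  refine ⟨|A| + (|β * σ| + |β * σ * (σ - 1)|) + 1, by positivity, fun t ht => ?_⟩
  rw [weightedDerivNorm_eq]
  rcases le_total t 1 with ht1 | ht1
  · rw [(eqOn_deriv_freg_one σ β).1 ht1, (eqOn_deriv_deriv_freg_one σ β).1 ht1]
    have hAt := hA t ⟨ht, ht1⟩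
    rw [Real.norm_eq_abs, abs_of_nonneg (by positivity)] at hAt
    exact abs_sqrt_mul_add_abs_rpow_mul_le hσ ht ht1
      (by linarith [le_abs_self A, abs_nonneg (β * σ), abs_nonneg (β * σ * (σ - 1))])
  · rw [(eqOn_deriv_freg_one σ β).2 ht1, (eqOn_deriv_deriv_freg_one σ β).2 ht1,
      abs_sqrt_mul_add_abs_rpow_mul_rpow_derivs β (by linarith)]
    gcongr ?_ * _
    linarith [abs_nonneg A]

theorem stmt13_general (σ β : ℝ) (hσ1 : σ < 1) :
    ∃ C₂ : ℝ, 0 < C₂ ∧ ∀ ε : ℝ, 0 < ε → ε < 1 → ∀ ρ : ℝ, 0 ≤ ρ →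
      |Real.sqrt ρ * deriv (freg σ β ε) ρ|
          + |ρ ^ ((3 : ℝ) / 2) * iteratedDeriv 2 (freg σ β ε) ρ|
        ≤ C₂ * ρ ^ (σ - 1 / 2) := by
  obtain ⟨M, hM, hbound⟩ := exists_weightedDerivNorm_freg_one_le σ β hσ1.le
  refine ⟨M, hM, fun ε hε _ ρ hρ => ?_⟩
  have hs : 0 < ε ^ 2 := by positivity
  obtain ⟨t, ht, rfl⟩ : ∃ t, 0 ≤ t ∧ ρ = ε ^ 2 * t :=
    ⟨ρ / ε ^ 2, by positivity, by field_simp⟩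
  have hfreg : freg σ β ε = fun x => (ε ^ 2) ^ σ * freg σ β 1 (x / ε ^ 2) :=
    funext (freg_eq_rescale σ β hε)
  change weightedDerivNorm (freg σ β ε) (ε ^ 2 * t) ≤ _
  rw [hfreg, weightedDerivNorm_rescale _ σ hs ht, Real.mul_rpow hs.le ht, mul_left_comm]
  exact mul_le_mul_of_nonneg_left (hbound t ht) (by positivity)

/-- For `1/2 < σ < 1`: `|√ρ f_ε'(ρ)| + |ρ^{3/2} f_ε''(ρ)| ≤ C₂ ρ^{σ-1/2}` for all `ρ ≥ 0`. -/
theorem stmt13 (σ β : ℝ) (hσ0 : 1 / 2 < σ) (hσ1 : σ < 1) :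
    ∃ C₂ : ℝ, 0 < C₂ ∧ ∀ ε : ℝ, 0 < ε → ε < 1 → ∀ ρ : ℝ, 0 ≤ ρ →
      |Real.sqrt ρ * deriv (freg σ β ε) ρ|
          + |ρ ^ ((3 : ℝ) / 2) * iteratedDeriv 2 (freg σ β ε) ρ|
        ≤ C₂ * ρ ^ (σ - 1 / 2) :=
  stmt13_general σ β hσ1
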